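/- Let F and G be persistence modules indexed by (ℝ, ≤) with values in vector spaces, and let I_ε denote restriction to the subposet εℤ. Then d_I(F,G) − 2ε ≤ d_I(I_ε(F), I_ε(G)) ≤ d_I(F,G) + ε, where d_I denotes interleaving distance. -/

import Mathlib

/-!
An interleaving of `F` and `G` with shift `δ ≤ εn` restricts to an `n`-step interleaving of
`I_ε F` and `I_ε G` once its components are pushed forward to the next grid point. Conversely, an
`n`-step interleaving of the restrictions extends to an `ε(n + 1)`-interleaving of `F` and `G`:
round `x` up to the grid point `ε⌈x/ε⌉`, apply the discrete component there and push forward along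
the structure maps, which costs one extra step `ε`. So each distance is at most the other plus `ε`;
when no interleaving exists on one side there is none on the other, and both infima are
`sInf ∅ = 0`.
-/

/-- A persistence module indexed by `(ℝ, ≤)` with values in `k`-vector spaces. -/
structure RPersMod (k : Type*) [Field k] where
  V : ℝ → Type*
  [grp : ∀ x, AddCommGroup (V x)]
  [mod : ∀ x, Module k (V x)]
  map : ∀ {x y : ℝ}, x ≤ y → (V x →ₗ[k] V y)
  map_id : ∀ x : ℝ, map (le_refl x) = LinearMap.id
  map_comp : ∀ {x y z : ℝ} (hxy : x ≤ y) (hyz : y ≤ z),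
    (map hyz).comp (map hxy) = map (hxy.trans hyz)

attribute [instance] RPersMod.grp RPersMod.mod

/-- A `δ`-interleaving of real-indexed persistence modules: a pair of natural
transformations shifting by `δ ≥ 0` whose composites are the `2δ` structure maps. -/
structure RItl {k : Type*} [Field k] (F G : RPersMod k) (δ : ℝ) where
  nonneg : 0 ≤ δ
  φ : ∀ x : ℝ, F.V x →ₗ[k] G.V (x + δ)
  ψ : ∀ x : ℝ, G.V x →ₗ[k] F.V (x + δ)
  φ_natural : ∀ {x y : ℝ} (h : x ≤ y),
    (φ y).comp (F.map h) = (G.map (by linarith : x + δ ≤ y + δ)).comp (φ x)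
  ψ_natural : ∀ {x y : ℝ} (h : x ≤ y),
    (ψ y).comp (G.map h) = (F.map (by linarith : x + δ ≤ y + δ)).comp (ψ x)
  comp_φψ : ∀ x : ℝ, (ψ (x + δ)).comp (φ x) = F.map (by linarith : x ≤ x + δ + δ)
  comp_ψφ : ∀ x : ℝ, (φ (x + δ)).comp (ψ x) = G.map (by linarith : x ≤ x + δ + δ)

/-- The interleaving distance between real-indexed persistence modules. -/
noncomputable def rDist {k : Type*} [Field k] (F G : RPersMod k) : ℝ :=
  sInf {δ : ℝ | Nonempty (RItl F G δ)}

/-- A persistence module indexed by `(ℤ, ≤)` (representing an `εℤ`-indexed module). -/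
structure ZPersMod (k : Type*) [Field k] where
  V : ℤ → Type*
  [grp : ∀ n, AddCommGroup (V n)]
  [mod : ∀ n, Module k (V n)]
  map : ∀ {m n : ℤ}, m ≤ n → (V m →ₗ[k] V n)
  map_id : ∀ n : ℤ, map (le_refl n) = LinearMap.id
  map_comp : ∀ {m n p : ℤ} (hmn : m ≤ n) (hnp : n ≤ p),
    (map hnp).comp (map hmn) = map (hmn.trans hnp)

attribute [instance] ZPersMod.grp ZPersMod.mod

/-- An interleaving of `ℤ`-indexed modules with shift `n` steps (i.e. `nε` for
an `εℤ`-indexed module). -/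
structure ZItl {k : Type*} [Field k] (M N : ZPersMod k) (n : ℕ) where
  φ : ∀ j : ℤ, M.V j →ₗ[k] N.V (j + n)
  ψ : ∀ j : ℤ, N.V j →ₗ[k] M.V (j + n)
  φ_natural : ∀ {i j : ℤ} (h : i ≤ j),
    (φ j).comp (M.map h) = (N.map (by omega : (i : ℤ) + (n : ℤ) ≤ j + (n : ℤ))).comp (φ i)
  ψ_natural : ∀ {i j : ℤ} (h : i ≤ j),
    (ψ j).comp (N.map h) = (M.map (by omega : (i : ℤ) + (n : ℤ) ≤ j + (n : ℤ))).comp (ψ i)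
  comp_φψ : ∀ j : ℤ, (ψ (j + n)).comp (φ j)
      = M.map (by omega : (j : ℤ) ≤ j + (n : ℤ) + (n : ℤ))
  comp_ψφ : ∀ j : ℤ, (φ (j + n)).comp (ψ j)
      = N.map (by omega : (j : ℤ) ≤ j + (n : ℤ) + (n : ℤ))

/-- The interleaving distance between `εℤ`-indexed persistence modules, as a
real number: the infimum of the shifts `ε·n` over all interleavings. -/
noncomputable def zDist {k : Type*} [Field k] (ε : ℝ) (M N : ZPersMod k) : ℝ :=
  sInf {δ : ℝ | ∃ n : ℕ, δ = ε * n ∧ Nonempty (ZItl M N n)}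

/-- `I_ε(F)`: the restriction of a real-indexed persistence module to the
subposet `εℤ` (indexed by `ℤ`, with `n` corresponding to `ε·n ∈ εℤ`). -/
def restrictPM {k : Type*} [Field k] (ε : ℝ) (hε : 0 < ε) (F : RPersMod k) :
    ZPersMod k where
  V n := F.V (ε * n)
  map {m n} h := F.map (by
    have : (m : ℝ) ≤ n := by exact_mod_cast h
    nlinarith)
  map_id n := F.map_id _
  map_comp hmn hnp := F.map_comp _ _

theorem sInf_le_sInf_add_of_forall_exists_le {S T : Set ℝ} {a : ℝ} (ha : 0 ≤ a)
    (hT : BddBelow T) (hST : ∀ s ∈ S, ∃ t ∈ T, t ≤ s + a) (hTS : T.Nonempty → S.Nonempty) :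
    sInf T ≤ sInf S + a := by
  rcases S.eq_empty_or_nonempty with rfl | hS
  · have hT₀ : T = ∅ := Set.not_nonempty_iff_eq_empty.1 fun hT' => (hTS hT').ne_empty rfl
    simp [hT₀, ha]
  · refine sub_le_iff_le_add.1 (le_csInf hS fun s hs => ?_)
    obtain ⟨t, ht, hts⟩ := hST s hs
    linarith [csInf_le hT ht]

theorem le_mul_ceil_div {ε : ℝ} (hε : 0 < ε) (x : ℝ) : x ≤ ε * ⌈x / ε⌉ := by
  rw [← div_le_iff₀' hε]
  exact Int.le_ceil _

theorem mul_lt_add_of_lt_div_add_one {ε a b : ℝ} (hε : 0 < ε) (h : a < b / ε + 1) :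
    ε * a < b + ε := by
  rwa [← mul_lt_mul_iff_right₀ hε, mul_add, mul_div_cancel₀ _ hε.ne', mul_one] at h

theorem mul_intCast_le_mul {ε : ℝ} (hε : 0 < ε) {i j : ℤ} (h : i ≤ j) :
    ε * (i : ℝ) ≤ ε * (j : ℝ) :=
  mul_le_mul_of_nonneg_left (Int.cast_le.2 h) hε.le

theorem mul_intCast_ceil_div_add_le {ε : ℝ} (hε : 0 < ε) (x : ℝ) (n : ℕ) :
    ε * ((⌈x / ε⌉ + n : ℤ) : ℝ) ≤ x + ε * (n + 1) := by
  have := mul_lt_add_of_lt_div_add_one hε (Int.ceil_lt_add_one (x / ε))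
  push_cast
  linarith

theorem ceil_div_add_le_ceil_add_mul_div {ε : ℝ} (hε : 0 < ε) (x : ℝ) (n : ℕ) :
    ⌈x / ε⌉ + n ≤ ⌈(x + ε * (n + 1)) / ε⌉ := by
  have h : (x + ε * (n + 1)) / ε = x / ε + ((n + 1 : ℕ) : ℝ) := by
    field_simp
    push_cast
    ring
  rw [h, Int.ceil_add_natCast]
  omega

section

variable {k : Type*} [Field k] {F G : RPersMod k}

theorem RPersMod.map_map (F : RPersMod k) {x y z : ℝ} (hxy : x ≤ y) (hyz : y ≤ z) (v : F.V x) :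
    F.map hyz (F.map hxy v) = F.map (hxy.trans hyz) v :=
  LinearMap.congr_fun (F.map_comp hxy hyz) v

namespace RItl

variable {δ : ℝ}

def symm (it : RItl F G δ) : RItl G F δ :=
  ⟨it.nonneg, it.ψ, it.φ, it.ψ_natural, it.φ_natural, it.comp_ψφ, it.comp_φψ⟩

@[simp]
theorem symm_φ (it : RItl F G δ) : it.symm.φ = it.ψ := rfl

theorem φ_natural_apply (it : RItl F G δ) {x y : ℝ} (h : x ≤ y) (v : F.V x) :
    it.φ y (F.map h v) = G.map (by linarith) (it.φ x v) :=
  LinearMap.congr_fun (it.φ_natural h) v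

theorem ψ_φ_apply (it : RItl F G δ) (x : ℝ) (v : F.V x) :
    it.ψ (x + δ) (it.φ x v) = F.map (by linarith [it.nonneg]) v :=
  LinearMap.congr_fun (it.comp_φψ x) v

variable {ε : ℝ} (hε : 0 < ε) {n : ℕ}

def restrictφ (it : RItl F G δ) (hn : δ ≤ ε * n) (j : ℤ) :
    F.V (ε * j) →ₗ[k] G.V (ε * ((j + n : ℤ) : ℝ)) :=
  G.map (show ε * j + δ ≤ ε * ((j + n : ℤ) : ℝ) by push_cast; linarith) ∘ₗ it.φ (ε * j)

theorem restrictφ_natural (it : RItl F G δ) (hn : δ ≤ ε * n) {i j : ℤ} (h : i ≤ j) :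
    it.restrictφ hn j ∘ₗ F.map (mul_intCast_le_mul hε h)
      = G.map (mul_intCast_le_mul hε (by omega : i + (n : ℤ) ≤ j + n))
          ∘ₗ it.restrictφ hn i := by
  ext v
  simp only [restrictφ, LinearMap.comp_apply]
  rw [φ_natural_apply, G.map_map, G.map_map]

theorem restrictφ_symm_comp (it : RItl F G δ) (hn : δ ≤ ε * n) (j : ℤ) :
    it.symm.restrictφ hn (j + n : ℤ) ∘ₗ it.restrictφ hn j
      = F.map (mul_intCast_le_mul hε (by omega : j ≤ j + n + n)) := by
  ext v
  simp only [restrictφ, LinearMap.comp_apply]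
  rw [it.symm.φ_natural_apply, symm_φ, ψ_φ_apply, F.map_map, F.map_map]

noncomputable def toZItl (it : RItl F G δ) (hn : δ ≤ ε * n) :
    ZItl (restrictPM ε hε F) (restrictPM ε hε G) n where
  φ := it.restrictφ hn
  ψ := it.symm.restrictφ hn
  φ_natural := it.restrictφ_natural hε hn
  ψ_natural := it.symm.restrictφ_natural hε hn
  comp_φψ := it.restrictφ_symm_comp hε hn
  comp_ψφ := it.symm.restrictφ_symm_comp hε hn

end RItl

namespace ZItl

variable {ε : ℝ} (hε : 0 < ε) {n : ℕ}

def symm {M N : ZPersMod k} (it : ZItl M N n) : ZItl N M n :=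
  ⟨it.ψ, it.φ, it.ψ_natural, it.φ_natural, it.comp_ψφ, it.comp_φψ⟩

-- `it.φ j` retyped, so that rewriting with lemmas about `F.map` and `G.map` sees the module
-- instances of `F` and `G` rather than those of their restrictions.
def gridφ (it : ZItl (restrictPM ε hε F) (restrictPM ε hε G) n) (j : ℤ) :
    F.V (ε * j) →ₗ[k] G.V (ε * ((j + n : ℤ) : ℝ)) :=
  it.φ j

theorem gridφ_natural_apply (it : ZItl (restrictPM ε hε F) (restrictPM ε hε G) n)
    {i j : ℤ} (h : i ≤ j) (v : F.V (ε * i)) :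
    it.gridφ hε j (F.map (mul_intCast_le_mul hε h) v)
      = G.map (mul_intCast_le_mul hε (by omega : i + (n : ℤ) ≤ j + n)) (it.gridφ hε i v) :=
  LinearMap.congr_fun (it.φ_natural h) v

theorem symm_gridφ_gridφ_apply (it : ZItl (restrictPM ε hε F) (restrictPM ε hε G) n) (j : ℤ)
    (v : F.V (ε * j)) :
    it.symm.gridφ hε (j + n) (it.gridφ hε j v)
      = F.map (mul_intCast_le_mul hε (by omega : j ≤ j + n + n)) v :=
  LinearMap.congr_fun (it.comp_φψ j) v

noncomputable def extendφ (it : ZItl (restrictPM ε hε F) (restrictPM ε hε G) n) (x : ℝ) :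
    F.V x →ₗ[k] G.V (x + ε * (n + 1)) :=
  G.map (mul_intCast_ceil_div_add_le hε x n) ∘ₗ it.gridφ hε ⌈x / ε⌉ ∘ₗ F.map (le_mul_ceil_div hε x)

theorem extendφ_natural (it : ZItl (restrictPM ε hε F) (restrictPM ε hε G) n) {x y : ℝ}
    (h : x ≤ y) :
    it.extendφ hε y ∘ₗ F.map h = G.map (by linarith) ∘ₗ it.extendφ hε x := by
  have hc : ⌈x / ε⌉ ≤ ⌈y / ε⌉ := Int.ceil_le_ceil (by gcongr)
  ext v
  simp only [extendφ, LinearMap.comp_apply]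
  rw [F.map_map, ← F.map_map (le_mul_ceil_div hε x) (mul_intCast_le_mul hε hc),
    it.gridφ_natural_apply hε hc, G.map_map, G.map_map]

theorem extendφ_symm_comp (it : ZItl (restrictPM ε hε F) (restrictPM ε hε G) n) (x : ℝ) :
    it.symm.extendφ hε (x + ε * (n + 1)) ∘ₗ it.extendφ hε x
      = F.map (by nlinarith) := by
  ext v
  simp only [extendφ, LinearMap.comp_apply]
  rw [G.map_map, it.symm.gridφ_natural_apply hε (ceil_div_add_le_ceil_add_mul_div hε x n),
    symm_gridφ_gridφ_apply, F.map_map, F.map_map, F.map_map]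

noncomputable def toRItl (it : ZItl (restrictPM ε hε F) (restrictPM ε hε G) n) :
    RItl F G (ε * (n + 1)) where
  nonneg := by positivity
  φ := it.extendφ hε
  ψ := it.symm.extendφ hε
  φ_natural := it.extendφ_natural hε
  ψ_natural := it.symm.extendφ_natural hε
  comp_φψ := it.extendφ_symm_comp hε
  comp_ψφ := it.symm.extendφ_symm_comp hε

end ZItl

theorem RItl.exists_zItl_mul_le {δ ε : ℝ} (hε : 0 < ε) (it : RItl F G δ) :
    ∃ n : ℕ, ε * n ≤ δ + ε ∧ Nonempty (ZItl (restrictPM ε hε F) (restrictPM ε hε G) n) := by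
  have hδε : 0 ≤ δ / ε := div_nonneg it.nonneg hε.le
  have hle : δ ≤ ε * ⌈δ / ε⌉₊ := (div_le_iff₀' hε).1 (Nat.le_ceil _)
  have hlt : ε * ⌈δ / ε⌉₊ < δ + ε := mul_lt_add_of_lt_div_add_one hε (Nat.ceil_lt_add_one hδε)
  exact ⟨⌈δ / ε⌉₊, hlt.le, ⟨it.toZItl hε hle⟩⟩

end

/-- Restriction to `εℤ` changes the interleaving distance by at most `2ε`
from below and `ε` from above. -/
theorem restriction_distance_bounds {k : Type*} [Field k] (F G : RPersMod k)
    (ε : ℝ) (hε : 0 < ε) :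
    rDist F G - 2 * ε ≤ zDist ε (restrictPM ε hε F) (restrictPM ε hε G) ∧
      zDist ε (restrictPM ε hε F) (restrictPM ε hε G) ≤ rDist F G + ε := by
  unfold rDist zDist
  set S : Set ℝ := {δ | Nonempty (RItl F G δ)}
  set Z : Set ℝ := {δ | ∃ n : ℕ, δ = ε * n ∧
    Nonempty (ZItl (restrictPM ε hε F) (restrictPM ε hε G) n)}
  have hS : BddBelow S := ⟨0, fun _ ⟨it⟩ => it.nonneg⟩
  have hZ : BddBelow Z := ⟨0, by rintro _ ⟨n, rfl, -⟩; positivity⟩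
  have hSZ : ∀ δ ∈ S, ∃ z ∈ Z, z ≤ δ + ε := by
    rintro δ ⟨it⟩
    obtain ⟨n, hn, hit⟩ := it.exists_zItl_mul_le hε
    exact ⟨_, ⟨n, rfl, hit⟩, hn⟩
  have hZS : ∀ z ∈ Z, ∃ δ ∈ S, δ ≤ z + ε := by
    rintro _ ⟨n, rfl, ⟨it⟩⟩
    exact ⟨_, ⟨it.toRItl hε⟩, (mul_add_one ε (n : ℝ)).le⟩
  have hSZ' := sInf_le_sInf_add_of_forall_exists_le hε.le hS hZS
    fun ⟨δ, hδ⟩ => (hSZ δ hδ).imp fun _ h => h.1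
  have hZS' := sInf_le_sInf_add_of_forall_exists_le hε.le hZ hSZ
    fun ⟨z, hz⟩ => (hZS z hz).imp fun _ h => h.1
  exact ⟨by linarith, hZS'⟩
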